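/- arXiv:2308.06826 — 8 statements merged into one kernel-verified Lean document; each statement's English description precedes it below -/
import Mathlib

section
/- If Ω ⊂ ℝ^{n+1} is a compact convex body with C¹ boundary and X ∈ ∂Ω, then no line parallel to the outward unit normal N_Ω(X) intersects the set ∂Ω⁺(X) = {Y ∈ ∂Ω : ⟨N_Ω(Y), N_Ω(X)⟩ > 0} in two distinct points; i.e., the orthogonal projection onto the tangent plane at X is injective on ∂Ω⁺(X). -/
/-- If `Ω ⊂ ℝ^{n+1}` is a compact convex body with C¹ boundary (encoded by an outward unit
normal map `N` that is unique at each boundary point), and `X ∈ ∂Ω`, then no line parallel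
to `N X` meets `∂Ω⁺(X) = {Y ∈ ∂Ω : ⟨N Y, N X⟩ > 0}` in two distinct points. -/
theorem projection_injOn_same_side {n : ℕ}
    (Ω : Set (EuclideanSpace ℝ (Fin (n + 1))))
    (N : EuclideanSpace ℝ (Fin (n + 1)) → EuclideanSpace ℝ (Fin (n + 1)))
    (hcomp : IsCompact Ω) (hconv : Convex ℝ Ω) (hint : (interior Ω).Nonempty)
    (hNunit : ∀ X ∈ frontier Ω, ‖N X‖ = 1)
    (hNsupp : ∀ X ∈ frontier Ω, ∀ Z ∈ Ω, (inner ℝ (N X) (Z - X) : ℝ) ≤ 0)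
    (hNuniq : ∀ X ∈ frontier Ω, ∀ V : EuclideanSpace ℝ (Fin (n + 1)), ‖V‖ = 1 →
      (∀ Z ∈ Ω, (inner ℝ V (Z - X) : ℝ) ≤ 0) → V = N X)
    (X : EuclideanSpace ℝ (Fin (n + 1))) (hX : X ∈ frontier Ω)
    (Y₁ Y₂ : EuclideanSpace ℝ (Fin (n + 1)))
    (hY₁ : Y₁ ∈ frontier Ω) (hY₂ : Y₂ ∈ frontier Ω)
    (hY₁p : (0 : ℝ) < inner ℝ (N Y₁) (N X)) (hY₂p : (0 : ℝ) < inner ℝ (N Y₂) (N X))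
    (hpar : ∃ lam : ℝ, Y₂ - Y₁ = lam • N X) :
    Y₁ = Y₂ := by
  obtain ⟨lam, hlam⟩ := hpar
  have hsub : frontier Ω ⊆ Ω := hcomp.isClosed.frontier_subset
  have h1 : (inner ℝ (N Y₁) (Y₂ - Y₁) : ℝ) ≤ 0 := hNsupp Y₁ hY₁ Y₂ (hsub hY₂)
  have h2 : (inner ℝ (N Y₂) (Y₁ - Y₂) : ℝ) ≤ 0 := hNsupp Y₂ hY₂ Y₁ (hsub hY₁)
  have hlam' : Y₁ - Y₂ = (-lam) • N X := by
    rw [neg_smul, ← hlam]; abel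
  rw [hlam, inner_smul_right] at h1
  rw [hlam', inner_smul_right] at h2
  have l1 : lam ≤ 0 := by nlinarith
  have l2 : -lam ≤ 0 := by nlinarith
  have : lam = 0 := le_antisymm l1 (by linarith)
  rw [this, zero_smul] at hlam
  exact (sub_eq_zero.mp hlam).symm
end

section
/- If Ω ⊂ ℝ^{n+1} is a compact convex body with C¹ boundary and X ∈ ∂Ω, then the set Ω_X := proj^Ω_X(∂Ω⁺(X)), the orthogonal projection of ∂Ω⁺(X) onto the tangent plane at X, is a convex subset of the tangent plane. -/
/-- If `Ω ⊂ ℝ^{n+1}` is a compact convex body with C¹ boundary and `X ∈ ∂Ω`, then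
`Ω_X`, the orthogonal projection of `∂Ω⁺(X)` onto the tangent plane at `X`, is convex. -/
theorem projected_same_side_convex {n : ℕ}
    (Ω : Set (EuclideanSpace ℝ (Fin (n + 1))))
    (N : EuclideanSpace ℝ (Fin (n + 1)) → EuclideanSpace ℝ (Fin (n + 1)))
    (hcomp : IsCompact Ω) (hconv : Convex ℝ Ω) (hint : (interior Ω).Nonempty)
    (hNunit : ∀ X ∈ frontier Ω, ‖N X‖ = 1)
    (hNsupp : ∀ X ∈ frontier Ω, ∀ Z ∈ Ω, (inner ℝ (N X) (Z - X) : ℝ) ≤ 0)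
    (hNuniq : ∀ X ∈ frontier Ω, ∀ V : EuclideanSpace ℝ (Fin (n + 1)), ‖V‖ = 1 →
      (∀ Z ∈ Ω, (inner ℝ V (Z - X) : ℝ) ≤ 0) → V = N X)
    (X : EuclideanSpace ℝ (Fin (n + 1))) (hX : X ∈ frontier Ω) :
    Convex ℝ ((fun Y => Y - (inner ℝ (N X) (Y - X) : ℝ) • N X) ''
      {Y | Y ∈ frontier Ω ∧ (0 : ℝ) < inner ℝ (N Y) (N X)}) := by
  set ν := N X with hνdef
  have hνnorm : ‖ν‖ = 1 := hNunit X hX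
  have hνν : (inner ℝ ν ν : ℝ) = 1 := by
    rw [real_inner_self_eq_norm_sq, hνnorm]; norm_num
  have hΩclosed : IsClosed Ω := hcomp.isClosed
  have hfrsub : frontier Ω ⊆ Ω := hΩclosed.frontier_subset
  rintro p₁ ⟨Y₁, ⟨hY₁f, hY₁pos⟩, rfl⟩ p₂ ⟨Y₂, ⟨hY₂f, hY₂pos⟩, rfl⟩ a b ha hb hab
  rcases eq_or_lt_of_le ha with rfl | ha'
  · have hb1 : b = 1 := by linarith
    subst hb1
    simpa using ⟨Y₂, ⟨hY₂f, hY₂pos⟩, rfl⟩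
  rcases eq_or_lt_of_le hb with rfl | hb'
  · have ha1 : a = 1 := by linarith
    subst ha1
    simpa using ⟨Y₁, ⟨hY₁f, hY₁pos⟩, rfl⟩
  -- main case: 0 < a, 0 < b; substitute b = 1 - a
  obtain rfl : b = 1 - a := by linarith
  set s₁ : ℝ := inner ℝ ν (Y₁ - X) with hs₁
  set s₂ : ℝ := inner ℝ ν (Y₂ - X) with hs₂
  set p : EuclideanSpace ℝ (Fin (n + 1)) :=
    a • (Y₁ - s₁ • ν) + (1 - a) • (Y₂ - s₂ • ν) with hp
  set T : Set ℝ := {t : ℝ | p + t • ν ∈ Ω} with hT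
  set t₀ : ℝ := a * s₁ + (1 - a) * s₂ with ht₀
  have ht₀mem : t₀ ∈ T := by
    have h : p + t₀ • ν = a • Y₁ + (1 - a) • Y₂ := by
      rw [ht₀, hp]; module
    show p + t₀ • ν ∈ Ω
    rw [h]
    exact hconv (hfrsub hY₁f) (hfrsub hY₂f) ha hb (by ring)
  have hTne : T.Nonempty := ⟨_, ht₀mem⟩
  have hTclosed : IsClosed T := by
    have : Continuous fun t : ℝ => p + t • ν :=
      continuous_const.add (continuous_id.smul continuous_const)
    exact hΩclosed.preimage this
  obtain ⟨R, hR⟩ : ∃ R, ∀ Z ∈ Ω, ‖Z‖ ≤ R := hcomp.isBounded.exists_norm_le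
  have hTbdd : BddAbove T := by
    refine ⟨R + ‖p‖, fun t ht => ?_⟩
    have h1 : t = inner ℝ ν ((p + t • ν) - p) := by
      rw [show (p + t • ν) - p = t • ν by abel, real_inner_smul_right, hνν]; ring
    have h2 : |(inner ℝ ν ((p + t • ν) - p) : ℝ)| ≤ ‖(p + t • ν) - p‖ := by
      calc |(inner ℝ ν ((p + t • ν) - p) : ℝ)| ≤ ‖ν‖ * ‖(p + t • ν) - p‖ :=
            abs_real_inner_le_norm _ _
        _ = ‖(p + t • ν) - p‖ := by rw [hνnorm, one_mul]
    have h3 : ‖(p + t • ν) - p‖ ≤ R + ‖p‖ := by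
      calc ‖(p + t • ν) - p‖ ≤ ‖p + t • ν‖ + ‖p‖ := norm_sub_le _ _
        _ ≤ R + ‖p‖ := by gcongr; exact hR _ ht
    calc t ≤ |t| := le_abs_self t
      _ = |(inner ℝ ν ((p + t • ν) - p) : ℝ)| := by rw [← h1]
      _ ≤ R + ‖p‖ := h2.trans h3
  set t' : ℝ := sSup T with ht'
  have ht'mem : t' ∈ T := hTclosed.csSup_mem hTne hTbdd
  set Y : EuclideanSpace ℝ (Fin (n + 1)) := p + t' • ν with hY
  have hYΩ : Y ∈ Ω := ht'mem
  have hYfront : Y ∈ frontier Ω := by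
    rw [hΩclosed.frontier_eq]
    refine ⟨hYΩ, fun hYint => ?_⟩
    obtain ⟨ε, hε, hball⟩ := Metric.isOpen_iff.1 isOpen_interior Y hYint
    have hmem : p + (t' + ε / 2) • ν ∈ Ω := by
      apply interior_subset
      apply hball
      rw [Metric.mem_ball, dist_eq_norm]
      have h : p + (t' + ε / 2) • ν - Y = (ε / 2) • ν := by rw [hY]; module
      rw [h, norm_smul, hνnorm, mul_one, Real.norm_eq_abs,
        abs_of_pos (by linarith : (0:ℝ) < ε / 2)]
      linarith
    have : t' + ε / 2 ≤ t' := le_csSup hTbdd hmem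
    linarith
  -- p lies in the tangent plane at X
  have hpX : (inner ℝ ν (p - X) : ℝ) = 0 := by
    have h : p - X = a • (Y₁ - X) + (1 - a) • (Y₂ - X) - t₀ • ν := by
      rw [hp, ht₀]; module
    rw [h, inner_sub_right, inner_add_right, real_inner_smul_right,
      real_inner_smul_right, real_inner_smul_right, hνν, ← hs₁, ← hs₂, ht₀]
    ring
  have hYX : (inner ℝ ν (Y - X) : ℝ) = t' := by
    have h : Y - X = (p - X) + t' • ν := by rw [hY]; abel
    rw [h, inner_add_right, real_inner_smul_right, hνν, hpX]; ring
  -- the key positivity claim: the outward normal at Y points to the same side as ν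
  have hc : (0 : ℝ) < inner ℝ (N Y) ν := by
    by_contra hcle
    push_neg at hcle
    have ha₁ : (inner ℝ (N Y) (Y₁ - Y) : ℝ) ≤ 0 := hNsupp Y hYfront Y₁ (hfrsub hY₁f)
    have ha₂ : (inner ℝ (N Y) (Y₂ - Y) : ℝ) ≤ 0 := hNsupp Y hYfront Y₂ (hfrsub hY₂f)
    have ht₀le : t₀ ≤ t' := le_csSup hTbdd ht₀mem
    have hcomb : a * (inner ℝ (N Y) (Y₁ - Y) : ℝ) + (1 - a) * (inner ℝ (N Y) (Y₂ - Y) : ℝ)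
        = (t₀ - t') * (inner ℝ (N Y) ν : ℝ) := by
      have h1 : a • (Y₁ - Y) + (1 - a) • (Y₂ - Y) = (t₀ - t') • ν := by
        rw [hY, hp, ht₀]; module
      calc a * (inner ℝ (N Y) (Y₁ - Y) : ℝ) + (1 - a) * (inner ℝ (N Y) (Y₂ - Y) : ℝ)
          = (inner ℝ (N Y) (a • (Y₁ - Y) + (1 - a) • (Y₂ - Y)) : ℝ) := by
            rw [inner_add_right, real_inner_smul_right, real_inner_smul_right]
        _ = (t₀ - t') * (inner ℝ (N Y) ν : ℝ) := by
            rw [h1, real_inner_smul_right]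
    have hprod : (0 : ℝ) ≤ (t₀ - t') * (inner ℝ (N Y) ν : ℝ) := by
      nlinarith [mul_nonneg (sub_nonneg.2 ht₀le) (neg_nonneg.2 hcle)]
    have haa₁ : a * (inner ℝ (N Y) (Y₁ - Y) : ℝ) ≤ 0 :=
      mul_nonpos_iff.mpr (Or.inl ⟨ha, ha₁⟩)
    have hba₂ : (1 - a) * (inner ℝ (N Y) (Y₂ - Y) : ℝ) ≤ 0 :=
      mul_nonpos_iff.mpr (Or.inl ⟨by linarith, ha₂⟩)
    have haa₁0 : a * (inner ℝ (N Y) (Y₁ - Y) : ℝ) = 0 := by linarith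
    have ha₁0 : (inner ℝ (N Y) (Y₁ - Y) : ℝ) = 0 := by
      rcases mul_eq_zero.mp haa₁0 with h | h
      · exact absurd h (ne_of_gt ha')
      · exact h
    have hsupp1 : ∀ Z ∈ Ω, (inner ℝ (N Y) (Z - Y₁) : ℝ) ≤ 0 := by
      intro Z hZ
      have h : Z - Y₁ = (Z - Y) - (Y₁ - Y) := by abel
      rw [h, inner_sub_right, ha₁0, sub_zero]
      exact hNsupp Y hYfront Z hZ
    have hNeq : N Y = N Y₁ := hNuniq Y₁ hY₁f (N Y) (hNunit Y hYfront) hsupp1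
    rw [hNeq] at hcle
    exact absurd hY₁pos (not_lt.2 hcle)
  refine ⟨Y, ⟨hYfront, hc⟩, ?_⟩
  show Y - (inner ℝ ν (Y - X) : ℝ) • ν = a • (Y₁ - s₁ • ν) + (1 - a) • (Y₂ - s₂ • ν)
  rw [hYX, hY, hp]
  module
end

section
/- Let Ω ⊂ ℝ^{n+1} be a compact convex body with C¹ boundary, Θ ∈ [0,1), and let r > 0 satisfy ω_Ω(r) < √(2−2Θ). Then for any X₀ ∈ ∂Ω, the cone K := {X ∈ ℝ^{n+1} : ⟨X − X₀, −N_Ω(X₀)⟩ ≥ √(1−Θ²)·|X − X₀|} intersected with the open ball B_r(X₀) is contained in Ω. -/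
set_option maxHeartbeats 1000000

open scoped RealInnerProductSpace

private lemma aux_decomp {E : Type*} [NormedAddCommGroup E] [InnerProductSpace ℝ E]
    (u w e : E) (he : ‖e‖ = 1) :
    ⟪u, w⟫ ≤ ⟪u, e⟫ * ⟪w, e⟫ +
      Real.sqrt (‖u‖ ^ 2 - ⟪u, e⟫ ^ 2) * Real.sqrt (‖w‖ ^ 2 - ⟪w, e⟫ ^ 2) := by
  set u' := u - ⟪u, e⟫ • e with hu'
  set w' := w - ⟪w, e⟫ • e with hw'
  have hee : ⟪e, e⟫ = (1:ℝ) := by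
    rw [real_inner_self_eq_norm_sq, he]; ring
  have h1 : ⟪u', w'⟫ = ⟪u, w⟫ - ⟪u, e⟫ * ⟪w, e⟫ := by
    simp only [hu', hw', inner_sub_left, inner_sub_right, real_inner_smul_left,
      real_inner_smul_right, hee, real_inner_comm e u, real_inner_comm e w]
    ring
  have h2 : ‖u'‖ ^ 2 = ‖u‖ ^ 2 - ⟪u, e⟫ ^ 2 := by
    rw [← real_inner_self_eq_norm_sq, ← real_inner_self_eq_norm_sq]
    simp only [hu', inner_sub_left, inner_sub_right, real_inner_smul_left,
      real_inner_smul_right, hee, real_inner_comm e u]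
    ring
  have h3 : ‖w'‖ ^ 2 = ‖w‖ ^ 2 - ⟪w, e⟫ ^ 2 := by
    rw [← real_inner_self_eq_norm_sq, ← real_inner_self_eq_norm_sq]
    simp only [hw', inner_sub_left, inner_sub_right, real_inner_smul_left,
      real_inner_smul_right, hee, real_inner_comm e w]
    ring
  have h4 : ⟪u', w'⟫ ≤ ‖u'‖ * ‖w'‖ := real_inner_le_norm u' w'
  have h5 : ‖u'‖ = Real.sqrt (‖u‖ ^ 2 - ⟪u, e⟫ ^ 2) := by
    rw [← h2, Real.sqrt_sq (norm_nonneg _)]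
  have h6 : ‖w'‖ = Real.sqrt (‖w‖ ^ 2 - ⟪w, e⟫ ^ 2) := by
    rw [← h3, Real.sqrt_sq (norm_nonneg _)]
  rw [h5, h6] at h4
  linarith

/-- Interior cone condition: if `ω_Ω(r) < √(2-2Θ)`, then for any `X₀ ∈ ∂Ω` the cone
`{X : ⟨X - X₀, -N X₀⟩ ≥ √(1-Θ²)·|X - X₀|}` intersected with `B_r(X₀)` lies in `Ω`. -/
theorem cone_inclusion {n : ℕ}
    (Ω : Set (EuclideanSpace ℝ (Fin (n + 1))))
    (N : EuclideanSpace ℝ (Fin (n + 1)) → EuclideanSpace ℝ (Fin (n + 1)))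
    (hcomp : IsCompact Ω) (hconv : Convex ℝ Ω) (hint : (interior Ω).Nonempty)
    (hNunit : ∀ X ∈ frontier Ω, ‖N X‖ = 1)
    (hNsupp : ∀ X ∈ frontier Ω, ∀ Z ∈ Ω, (inner ℝ (N X) (Z - X) : ℝ) ≤ 0)
    (hNuniq : ∀ X ∈ frontier Ω, ∀ V : EuclideanSpace ℝ (Fin (n + 1)), ‖V‖ = 1 →
      (∀ Z ∈ Ω, (inner ℝ V (Z - X) : ℝ) ≤ 0) → V = N X)
    (Θ r : ℝ) (hΘ0 : 0 ≤ Θ) (hΘ1 : Θ < 1) (hr : 0 < r)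
    (hω : ∀ X₁ ∈ frontier Ω, ∀ X₂ ∈ frontier Ω,
      dist X₁ X₂ < r → ‖N X₁ - N X₂‖ < Real.sqrt (2 - 2 * Θ))
    (X₀ : EuclideanSpace ℝ (Fin (n + 1))) (hX₀ : X₀ ∈ frontier Ω) :
    {X : EuclideanSpace ℝ (Fin (n + 1)) |
        Real.sqrt (1 - Θ ^ 2) * ‖X - X₀‖ ≤ (inner ℝ (X - X₀) (-(N X₀)) : ℝ)} ∩
      Metric.ball X₀ r ⊆ Ω := by
  have hclosed : IsClosed Ω := hcomp.isClosed
  have hX₀Ω : X₀ ∈ Ω := by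
    rw [hclosed.frontier_eq] at hX₀; exact hX₀.1
  rintro X ⟨hXcone, hXball⟩
  by_contra hXΩ
  -- projection Y of X onto Ω
  obtain ⟨Y, hYΩ, hYmin⟩ := exists_norm_eq_iInf_of_complete_convex ⟨X₀, hX₀Ω⟩
    (hclosed.isComplete) hconv X
  have hproj : ∀ Z ∈ Ω, ⟪X - Y, Z - Y⟫ ≤ 0 :=
    (norm_eq_iInf_iff_real_inner_le_zero hconv hYΩ).1 hYmin
  have hXY : X ≠ Y := fun h => hXΩ (h ▸ hYΩ)
  have hXYnorm : 0 < ‖X - Y‖ := by rwa [norm_pos_iff, sub_ne_zero]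
  -- Y ∈ frontier Ω
  have hYfr : Y ∈ frontier Ω := by
    rw [hclosed.frontier_eq]
    refine ⟨hYΩ, fun hYi => ?_⟩
    obtain ⟨ε, hε, hball⟩ := Metric.isOpen_iff.1 isOpen_interior Y hYi
    set Z := Y + (ε / (2 * ‖X - Y‖)) • (X - Y) with hZ
    have hZΩ : Z ∈ Ω := by
      apply interior_subset
      apply hball
      rw [Metric.mem_ball, dist_eq_norm, hZ]
      have h0 : Y + (ε / (2 * ‖X - Y‖)) • (X - Y) - Y = (ε / (2 * ‖X - Y‖)) • (X - Y) := by
        abel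
      rw [h0, norm_smul, Real.norm_eq_abs, abs_of_pos (by positivity)]
      have h1 : ε / (2 * ‖X - Y‖) * ‖X - Y‖ = ε / 2 := by
        field_simp
      rw [h1]; linarith
    have h2 := hproj Z hZΩ
    rw [hZ] at h2
    have h3 : Y + (ε / (2 * ‖X - Y‖)) • (X - Y) - Y = (ε / (2 * ‖X - Y‖)) • (X - Y) := by abel
    rw [h3, real_inner_smul_right, real_inner_self_eq_norm_sq] at h2
    have hpos : 0 < ε / (2 * ‖X - Y‖) := by positivity
    nlinarith [mul_pos hpos (pow_pos hXYnorm 2)]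
  -- the unit vector X-Y normalized is N Y
  have hNY : (‖X - Y‖⁻¹) • (X - Y) = N Y := by
    apply hNuniq Y hYfr
    · rw [norm_smul, Real.norm_eq_abs, abs_of_pos (by positivity),
        inv_mul_cancel₀ hXYnorm.ne']
    · intro Z hZ
      rw [real_inner_smul_left]
      exact mul_nonpos_of_nonneg_of_nonpos (by positivity) (hproj Z hZ)
  -- Y is close to X₀
  have hdX : ‖X - X₀‖ < r := by
    rw [Metric.mem_ball, dist_eq_norm] at hXball; exact hXball
  have hYX₀ : dist Y X₀ < r := by
    have hexp : ‖X - X₀‖ ^ 2 = ‖X - Y‖ ^ 2 + 2 * ⟪X - Y, Y - X₀⟫ + ‖Y - X₀‖ ^ 2 := by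
      have h0 : X - X₀ = (X - Y) + (Y - X₀) := by abel
      rw [h0, norm_add_sq_real]
    have hp : ⟪X - Y, X₀ - Y⟫ ≤ 0 := hproj X₀ hX₀Ω
    have hflip : ⟪X - Y, Y - X₀⟫ = -⟪X - Y, X₀ - Y⟫ := by
      rw [← inner_neg_right]; congr 1; abel
    rw [dist_eq_norm]
    nlinarith [norm_nonneg (Y - X₀), norm_nonneg (X - X₀), norm_nonneg (X - Y)]
  -- inner product of normals is > Θ
  have hb : Θ < ⟪N Y, N X₀⟫ := by
    have h := hω Y hYfr X₀ hX₀ hYX₀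
    have h2 : ‖N Y - N X₀‖ ^ 2 < 2 - 2 * Θ := by
      have hnn : (0:ℝ) ≤ 2 - 2 * Θ := by linarith
      nlinarith [Real.sq_sqrt hnn, Real.sqrt_nonneg (2 - 2 * Θ), norm_nonneg (N Y - N X₀)]
    have h3 : ‖N Y - N X₀‖ ^ 2 = ‖N Y‖ ^ 2 - 2 * ⟪N Y, N X₀⟫ + ‖N X₀‖ ^ 2 :=
      norm_sub_sq_real _ _
    rw [hNunit Y hYfr, hNunit X₀ hX₀] at h3
    nlinarith
  -- lower bound on ⟪X - X₀, N Y⟫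
  have hlow : 0 < ⟪X - X₀, N Y⟫ := by
    have hsplit : ⟪X - X₀, N Y⟫ = ⟪X - Y, N Y⟫ + ⟪Y - X₀, N Y⟫ := by
      rw [← inner_add_left]; congr 1; abel
    have h1 : ⟪X - Y, N Y⟫ = ‖X - Y‖ := by
      rw [← hNY, real_inner_smul_right, real_inner_self_eq_norm_sq]
      field_simp
    have h2 : 0 ≤ ⟪Y - X₀, N Y⟫ := by
      have := hNsupp Y hYfr X₀ hX₀Ω
      rw [real_inner_comm]
      have hneg : (X₀ : EuclideanSpace ℝ (Fin (n+1))) - Y = -(Y - X₀) := by abel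
      rw [hneg, inner_neg_right] at this
      linarith
    rw [hsplit, h1]
    linarith
  -- upper bound via decomposition
  have hXX₀ : X ≠ X₀ := fun h => hXΩ (h ▸ hX₀Ω)
  have hd : 0 < ‖X - X₀‖ := by rwa [norm_pos_iff, sub_ne_zero]
  set d := ‖X - X₀‖ with hdd
  set s := Real.sqrt (1 - Θ ^ 2) with hss
  have hΘsq : (0:ℝ) < 1 - Θ ^ 2 := by nlinarith
  have hs : 0 < s := Real.sqrt_pos.2 hΘsq
  have hs2 : s ^ 2 = 1 - Θ ^ 2 := Real.sq_sqrt hΘsq.le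
  set a := (⟪X - X₀, N X₀⟫ : ℝ) with haa
  set b := (⟪N Y, N X₀⟫ : ℝ) with hbb
  have ha : a ≤ -(s * d) := by
    have hXcone' : s * d ≤ (inner ℝ (X - X₀) (-(N X₀)) : ℝ) := hXcone
    rw [inner_neg_right] at hXcone'
    linarith
  have hb1 : b ≤ 1 := by
    have := real_inner_le_norm (N Y) (N X₀)
    rw [hNunit Y hYfr, hNunit X₀ hX₀] at this
    linarith
  have key := aux_decomp (X - X₀) (N Y) (N X₀) (hNunit X₀ hX₀)
  have hsq1 : Real.sqrt (‖X - X₀‖ ^ 2 - a ^ 2) ≤ Θ * d := by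
    have hle : ‖X - X₀‖ ^ 2 - a ^ 2 ≤ (Θ * d) ^ 2 := by
      have ha2 : (s * d) ^ 2 ≤ a ^ 2 := by
        have : s * d ≤ -a := by linarith
        nlinarith [mul_pos hs hd]
      nlinarith
    calc Real.sqrt (‖X - X₀‖ ^ 2 - a ^ 2) ≤ Real.sqrt ((Θ * d) ^ 2) :=
          Real.sqrt_le_sqrt hle
      _ = Θ * d := Real.sqrt_sq (by positivity)
  have hsq2 : Real.sqrt (‖N Y‖ ^ 2 - b ^ 2) ≤ s := by
    have hle : ‖N Y‖ ^ 2 - b ^ 2 ≤ s ^ 2 := by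
      rw [hNunit Y hYfr, hs2]
      nlinarith
    calc Real.sqrt (‖N Y‖ ^ 2 - b ^ 2) ≤ Real.sqrt (s ^ 2) := Real.sqrt_le_sqrt hle
      _ = s := Real.sqrt_sq hs.le
  have hsqrt1nn : 0 ≤ Real.sqrt (‖X - X₀‖ ^ 2 - a ^ 2) := Real.sqrt_nonneg _
  have hsqrt2nn : 0 ≤ Real.sqrt (‖N Y‖ ^ 2 - b ^ 2) := Real.sqrt_nonneg _
  have hprod : Real.sqrt (‖X - X₀‖ ^ 2 - a ^ 2) * Real.sqrt (‖N Y‖ ^ 2 - b ^ 2)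
      ≤ (Θ * d) * s := mul_le_mul hsq1 hsq2 hsqrt2nn (by positivity)
  have hab : a * b ≤ -(s * d) * b := by
    have hbpos : 0 < b := lt_of_le_of_lt hΘ0 hb
    nlinarith
  have : ⟪X - X₀, N Y⟫ < 0 := by
    calc ⟪X - X₀, N Y⟫ ≤ a * b + Real.sqrt (‖X - X₀‖ ^ 2 - a ^ 2) *
          Real.sqrt (‖N Y‖ ^ 2 - b ^ 2) := key
      _ ≤ -(s * d) * b + Θ * d * s := by linarith
      _ < -(s * d) * Θ + Θ * d * s := by
          have := mul_pos hs hd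
          nlinarith
      _ = 0 := by ring
  linarith
end

section
/- Let Ω ⊂ ℝ^{n+1} be a compact convex body with C¹ boundary, fix X₀ ∈ ∂Ω, and let X ∈ ∂Ω⁺(X₀), X̄₀, X̄₁ ∈ ∂Ω⁺(X₀). Let X̄_t be the c-segment from X̄₀ to X̄₁ with respect to X₀ (the lift to the graph of β_{X₀} of the straight segment joining the tangent-plane projections of X̄₀ and X̄₁). Then for the cost c(X,Y) = |X−Y|²/2 and all t ∈ [0,1]: −c(X, X̄_t) + c(X₀, X̄_t) + c(X, X̄₀) − c(X₀, X̄₀) ≤ t·(−c(X, X̄₁) + c(X₀, X̄₁) + c(X, X̄₀) − c(X₀, X̄₀)). -/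
/-- The QQConv inequality for the quadratic cost on a convex boundary, in coordinates where
`N(X₀) = e_{n+1}`: writing boundary points of `∂Ω⁺(X₀)` as graph points `(z, β z)` of the
concave function `β` over the convex set `D`, with `β ≤ β x₀` on `D` (the tangent plane at
`X₀` touches from above), and `c((x,s),(y,t)) = (|x-y|² + (s-t)²)/2`, the c-segment
`X̄_t = ((1-t)x̄₀ + t x̄₁, β((1-t)x̄₀ + t x̄₁))` satisfies
`-c(X,X̄_t)+c(X₀,X̄_t)+c(X,X̄₀)-c(X₀,X̄₀) ≤ t(-c(X,X̄₁)+c(X₀,X̄₁)+c(X,X̄₀)-c(X₀,X̄₀))`. -/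
theorem qqconv_holds {n : ℕ}
    (D : Set (EuclideanSpace ℝ (Fin n))) (hD : Convex ℝ D)
    (β : EuclideanSpace ℝ (Fin n) → ℝ) (hβ : ConcaveOn ℝ D β)
    (c : EuclideanSpace ℝ (Fin n) → ℝ → EuclideanSpace ℝ (Fin n) → ℝ → ℝ)
    (hc : ∀ x s y t, c x s y t = (‖x - y‖ ^ 2 + (s - t) ^ 2) / 2)
    (x x₀ xb₀ xb₁ : EuclideanSpace ℝ (Fin n))
    (hx : x ∈ D) (hx₀ : x₀ ∈ D) (hxb₀ : xb₀ ∈ D) (hxb₁ : xb₁ ∈ D)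
    (hmax : ∀ y ∈ D, β y ≤ β x₀)
    (t : ℝ) (ht : t ∈ Set.Icc (0 : ℝ) 1) :
    -c x (β x) ((1 - t) • xb₀ + t • xb₁) (β ((1 - t) • xb₀ + t • xb₁))
      + c x₀ (β x₀) ((1 - t) • xb₀ + t • xb₁) (β ((1 - t) • xb₀ + t • xb₁))
      + c x (β x) xb₀ (β xb₀) - c x₀ (β x₀) xb₀ (β xb₀)
    ≤ t * (-c x (β x) xb₁ (β xb₁) + c x₀ (β x₀) xb₁ (β xb₁)
      + c x (β x) xb₀ (β xb₀) - c x₀ (β x₀) xb₀ (β xb₀)) := by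
  obtain ⟨ht0, ht1⟩ := ht
  set z : EuclideanSpace ℝ (Fin n) := (1 - t) • xb₀ + t • xb₁ with hz
  have hconc : (1 - t) * β xb₀ + t * β xb₁ ≤ β z := by
    have := hβ.2 hxb₀ hxb₁ (sub_nonneg.2 ht1) ht0 (by ring)
    simpa [smul_eq_mul] using this
  have ha : β x ≤ β x₀ := hmax x hx
  have key : ∀ y : EuclideanSpace ℝ (Fin n),
      -‖x - y‖ ^ 2 + ‖x₀ - y‖ ^ 2
      = ‖x₀‖ ^ 2 - ‖x‖ ^ 2 + 2 * inner ℝ (x - x₀) y := by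
    intro y
    have h1 : ‖x - y‖ ^ 2 = ‖x‖ ^ 2 - 2 * inner ℝ x y + ‖y‖ ^ 2 :=
      @norm_sub_sq_real (EuclideanSpace ℝ (Fin n)) _ _ x y
    have h2 : ‖x₀ - y‖ ^ 2 = ‖x₀‖ ^ 2 - 2 * inner ℝ x₀ y + ‖y‖ ^ 2 :=
      @norm_sub_sq_real (EuclideanSpace ℝ (Fin n)) _ _ x₀ y
    have h3 : (inner ℝ (x - x₀) y : ℝ) = inner ℝ x y - inner ℝ x₀ y := inner_sub_left x x₀ y
    rw [h1, h2, h3]; ring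
  have hlin : (inner ℝ (x - x₀) z : ℝ)
      = (1 - t) * inner ℝ (x - x₀) xb₀ + t * inner ℝ (x - x₀) xb₁ := by
    rw [hz, inner_add_right, real_inner_smul_right, real_inner_smul_right]
  have k0 := key xb₀
  have k1 := key xb₁
  have kz := key z
  rw [hlin] at kz
  rw [hc, hc, hc, hc, hc, hc]
  set βz := β z
  nlinarith [mul_nonneg ht0 (sub_nonneg.2 ha), mul_le_mul_of_nonpos_right hconc
    (sub_nonpos.2 ha : β x - β x₀ ≤ 0)]
end

section
/- Let Ω ⊂ ℝ^{n+1} be a compact convex body with C¹ boundary, X ∈ ∂Ω, and define λ₊ := sup{λ ≥ 0 : X + λ·N_Ω(X₀) ∈ Ω} for some fixed X₀ ∈ ∂Ω, and X⁺ := X + λ₊·N_Ω(X₀). Then X⁺ ∈ ∂Ω and X⁺ lies in the closure of ∂Ω⁺(X₀) = {Y ∈ ∂Ω : ⟨N_Ω(Y), N_Ω(X₀)⟩ > 0}. -/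
/-- Moving from a boundary point `X` in the direction of the outward normal `N X₀` at
another boundary point `X₀`, until exiting `Ω`, lands on `∂Ω` and in the closure of the
"same side" region `∂Ω⁺(X₀) = {Y ∈ ∂Ω : ⟨N Y, N X₀⟩ > 0}`. -/
theorem normal_push_in_closure_same_side {n : ℕ}
    (Ω : Set (EuclideanSpace ℝ (Fin (n + 1))))
    (N : EuclideanSpace ℝ (Fin (n + 1)) → EuclideanSpace ℝ (Fin (n + 1)))
    (hcomp : IsCompact Ω) (hconv : Convex ℝ Ω) (hint : (interior Ω).Nonempty)
    (hNunit : ∀ X ∈ frontier Ω, ‖N X‖ = 1)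
    (hNsupp : ∀ X ∈ frontier Ω, ∀ Z ∈ Ω, (inner ℝ (N X) (Z - X) : ℝ) ≤ 0)
    (hNuniq : ∀ X ∈ frontier Ω, ∀ V : EuclideanSpace ℝ (Fin (n + 1)), ‖V‖ = 1 →
      (∀ Z ∈ Ω, (inner ℝ V (Z - X) : ℝ) ≤ 0) → V = N X)
    (hNcont : ContinuousOn N (frontier Ω))
    (X X₀ : EuclideanSpace ℝ (Fin (n + 1))) (hX : X ∈ frontier Ω) (hX₀ : X₀ ∈ frontier Ω) :
    X + (sSup {lam : ℝ | 0 ≤ lam ∧ X + lam • N X₀ ∈ Ω}) • N X₀ ∈ frontier Ω ∧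
    X + (sSup {lam : ℝ | 0 ≤ lam ∧ X + lam • N X₀ ∈ Ω}) • N X₀ ∈
      closure {Y | Y ∈ frontier Ω ∧ (0 : ℝ) < inner ℝ (N Y) (N X₀)} := by
  classical
  have hΩclosed : IsClosed Ω := hcomp.isClosed
  have hXΩ : X ∈ Ω := hΩclosed.frontier_subset hX
  have hN₀ : ‖N X₀‖ = 1 := hNunit X₀ hX₀
  set S : Set ℝ := {lam : ℝ | 0 ≤ lam ∧ X + lam • N X₀ ∈ Ω} with hS
  have hSne : S.Nonempty := ⟨0, le_refl 0, by simpa using hXΩ⟩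
  -- S is bounded above
  obtain ⟨R, hR⟩ := hcomp.isBounded.subset_closedBall 0
  have hSbdd : BddAbove S := by
    refine ⟨R + ‖X‖, fun lam hlam => ?_⟩
    obtain ⟨hlam0, hlamΩ⟩ := hlam
    have h1 : ‖X + lam • N X₀‖ ≤ R := by
      simpa [Metric.mem_closedBall, dist_eq_norm] using hR hlamΩ
    have h2 : lam = ‖lam • N X₀‖ := by
      rw [norm_smul, hN₀, Real.norm_eq_abs, abs_of_nonneg hlam0, mul_one]
    have h3 : X + lam • N X₀ - X = lam • N X₀ := by abel
    calc lam = ‖lam • N X₀‖ := h2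
      _ = ‖X + lam • N X₀ - X‖ := by rw [h3]
      _ ≤ ‖X + lam • N X₀‖ + ‖X‖ := norm_sub_le _ _
      _ ≤ R + ‖X‖ := by linarith
  have hSclosed : IsClosed S := by
    have : S = {lam : ℝ | 0 ≤ lam} ∩ (fun lam : ℝ => X + lam • N X₀) ⁻¹' Ω := rfl
    rw [this]
    exact (isClosed_le continuous_const continuous_id).inter
      (hΩclosed.preimage (continuous_const.add (continuous_id.smul continuous_const)))
  set lamP := sSup S with hlamP
  have hlamP_mem : lamP ∈ S := (isLUB_csSup hSne hSbdd).mem_of_isClosed hSne hSclosed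
  obtain ⟨hlamP0, hXpΩ⟩ := hlamP_mem
  set Xp := X + lamP • N X₀ with hXp
  -- beyond lamP we are outside Ω
  have hout : ∀ t : ℝ, 0 < t → Xp + t • N X₀ ∉ Ω := by
    intro t ht hmem
    have : lamP + t ∈ S := by
      refine ⟨by linarith, ?_⟩
      have : X + (lamP + t) • N X₀ = Xp + t • N X₀ := by
        rw [hXp, add_smul]; abel
      rw [this]; exact hmem
    have := le_csSup hSbdd this
    linarith
  -- Xp is on the frontier
  have hXpfr : Xp ∈ frontier Ω := by
    rw [hΩclosed.frontier_eq]
    refine ⟨hXpΩ, ?_⟩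
    intro hXpint
    obtain ⟨r, hr0, hball⟩ := Metric.isOpen_iff.1 isOpen_interior Xp hXpint
    have : Xp + (r/2) • N X₀ ∈ Ω := by
      apply interior_subset
      apply hball
      rw [Metric.mem_ball, dist_eq_norm]
      have : Xp + (r/2) • N X₀ - Xp = (r/2) • N X₀ := by abel
      rw [this, norm_smul, hN₀, Real.norm_eq_abs, abs_of_nonneg (by linarith), mul_one]
      linarith
    exact hout (r/2) (by linarith) this
  refine ⟨hXpfr, ?_⟩
  -- strict support inequality for interior points
  obtain ⟨W, hW⟩ := hint
  have hWΩ : W ∈ Ω := interior_subset hW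
  have hstrict : ∀ Y ∈ frontier Ω, (inner ℝ (N Y) (W - Y) : ℝ) < 0 := by
    intro Y hY
    obtain ⟨r, hr0, hball⟩ := Metric.isOpen_iff.1 isOpen_interior W hW
    have hZ : W + (r/2) • N Y ∈ Ω := by
      apply interior_subset; apply hball
      rw [Metric.mem_ball, dist_eq_norm]
      have : W + (r/2) • N Y - W = (r/2) • N Y := by abel
      rw [this, norm_smul, hNunit Y hY, Real.norm_eq_abs, abs_of_nonneg (by linarith), mul_one]
      linarith
    have := hNsupp Y hY _ hZ
    have heq : (inner ℝ (N Y) (W + (r/2) • N Y - Y) : ℝ)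
        = inner ℝ (N Y) (W - Y) + (r/2) * ‖N Y‖^2 := by
      have : W + (r/2) • N Y - Y = (W - Y) + (r/2) • N Y := by abel
      rw [this, inner_add_right, real_inner_smul_right, real_inner_self_eq_norm_sq]
    rw [heq, hNunit Y hY] at this
    nlinarith
  -- gauge of the translated body
  set s : Set (EuclideanSpace ℝ (Fin (n + 1))) := (fun z : EuclideanSpace ℝ (Fin (n + 1)) => W + z) ⁻¹' Ω with hs
  have hsconv : Convex ℝ s := by
    intro a ha b hb u v hu hv huv
    have : W + (u • a + v • b) = u • (W + a) + v • (W + b) := by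
      rw [smul_add, smul_add]
      rw [show u • W + u • a + (v • W + v • b) = (u • W + v • W) + (u • a + v • b) by abel,
        ← add_smul, huv, one_smul]
    show W + (u • a + v • b) ∈ Ω
    rw [this]
    exact hconv ha hb hu hv huv
  have hsnhds : s ∈ nhds (0 : EuclideanSpace ℝ (Fin (n + 1))) := by
    have : ContinuousAt (fun z : EuclideanSpace ℝ (Fin (n + 1)) => W + z) 0 := (continuous_const.add continuous_id).continuousAt
    have hΩnhds : Ω ∈ nhds (W + 0) := by
      rw [add_zero]
      exact mem_interior_iff_mem_nhds.1 hW
    exact this hΩnhds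
  have hsclosed : IsClosed s := hΩclosed.preimage (continuous_const.add continuous_id)
  have hmem_s : ∀ y : EuclideanSpace ℝ (Fin (n + 1)), y ∈ s ↔ W + y ∈ Ω := fun y => Iff.rfl
  have hfr_s : ∀ y : EuclideanSpace ℝ (Fin (n + 1)), y ∈ frontier s ↔ W + y ∈ frontier Ω := by
    intro y
    have h1 : s = (Homeomorph.addLeft W) ⁻¹' Ω := rfl
    rw [h1, ← Homeomorph.preimage_frontier]
    rfl
  have hgauge_mem : ∀ y : EuclideanSpace ℝ (Fin (n + 1)), gauge s y ≤ 1 ↔ W + y ∈ Ω := by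
    intro y
    rw [gauge_le_one_iff_mem_closure hsconv hsnhds, hsclosed.closure_eq]
    exact Iff.rfl
  have hgauge_fr : ∀ y : EuclideanSpace ℝ (Fin (n + 1)), gauge s y = 1 ↔ W + y ∈ frontier Ω := by
    intro y
    rw [gauge_eq_one_iff_mem_frontier hsconv hsnhds, hfr_s]
  -- the boundary point map
  set f : ℝ → EuclideanSpace ℝ (Fin (n + 1)) := fun t => W + (gauge s (Xp + t • N X₀ - W))⁻¹ • (Xp + t • N X₀ - W) with hf
  have hgXp : gauge s (Xp - W) = 1 := by
    rw [hgauge_fr]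
    have : W + (Xp - W) = Xp := by abel
    rw [this]
    exact hXpfr
  have hfcont : ContinuousAt f 0 := by
    have hc1 : Continuous fun t : ℝ => Xp + t • N X₀ - W :=
      (continuous_const.add (continuous_id.smul continuous_const)).sub continuous_const
    have hc2 : Continuous fun t : ℝ => gauge s (Xp + t • N X₀ - W) :=
      (continuous_gauge hsconv hsnhds).comp hc1
    have hne : gauge s (Xp + (0:ℝ) • N X₀ - W) ≠ 0 := by
      simpa [hgXp] using one_ne_zero
    exact continuous_const.continuousAt.add
      ((hc2.continuousAt.inv₀ hne).smul hc1.continuousAt)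
  have hf0 : f 0 = Xp := by
    simp only [hf, zero_smul, add_zero, hgXp, inv_one, one_smul]
    abel
  have htend : Filter.Tendsto f (nhdsWithin 0 (Set.Ioi 0)) (nhds Xp) := by
    rw [← hf0]
    exact hfcont.continuousWithinAt.tendsto
  refine mem_closure_of_tendsto htend ?_
  rw [Filter.eventually_iff_exists_mem]
  refine ⟨Set.Ioi 0, self_mem_nhdsWithin, fun t ht => ?_⟩
  have ht : (0:ℝ) < t := ht
  -- the point P t is outside Ω
  set P := Xp + t • N X₀ with hP
  have hPout : P ∉ Ω := hout t ht
  have hq1 : 1 < gauge s (P - W) := by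
    by_contra hle
    push_neg at hle
    have : W + (P - W) ∈ Ω := (hgauge_mem _).1 hle
    rw [show W + (P - W) = P by abel] at this
    exact hPout this
  set q := gauge s (P - W) with hq
  have hq0 : 0 < q := lt_trans one_pos hq1
  -- f t is on the frontier
  have hft : f t = W + q⁻¹ • (P - W) := rfl
  have hftfr : f t ∈ frontier Ω := by
    have : gauge s (q⁻¹ • (P - W)) = 1 := by
      rw [gauge_smul_of_nonneg (le_of_lt (inv_pos.2 hq0)), smul_eq_mul, ← hq,
        inv_mul_cancel₀ (ne_of_gt hq0)]
    have := (hgauge_fr _).1 this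
    rwa [hft]
  refine ⟨hftfr, ?_⟩
  -- positivity of the inner product
  have ha : (0:ℝ) < inner ℝ (N (f t)) (f t - W) := by
    have := hstrict (f t) hftfr
    have heq : (inner ℝ (N (f t)) (W - f t) : ℝ) = - inner ℝ (N (f t)) (f t - W) := by
      rw [show W - f t = -(f t - W) by abel, inner_neg_right]
    rw [heq] at this
    linarith
  have hPft : P - f t = (q - 1) • (f t - W) := by
    rw [hft]
    have h1 : W + q⁻¹ • (P - W) - W = q⁻¹ • (P - W) := by abel
    rw [h1, smul_smul, show P - (W + q⁻¹ • (P - W)) = (1 - q⁻¹) • (P - W) by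
      rw [sub_smul, one_smul]; abel]
    congr 1
    field_simp
  have h2 : (0:ℝ) < inner ℝ (N (f t)) (P - f t) := by
    rw [hPft, real_inner_smul_right]
    exact mul_pos (by linarith) ha
  have h3 : (inner ℝ (N (f t)) (Xp - f t) : ℝ) ≤ 0 := hNsupp (f t) hftfr Xp hXpΩ
  have h4 : (inner ℝ (N (f t)) (P - f t) : ℝ)
      = inner ℝ (N (f t)) (Xp - f t) + t * inner ℝ (N (f t)) (N X₀) := by
    rw [hP, show Xp + t • N X₀ - f t = (Xp - f t) + t • N X₀ by abel,
      inner_add_right, real_inner_smul_right]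
  have : (0:ℝ) < t * inner ℝ (N (f t)) (N X₀) := by
    rw [h4] at h2; linarith
  by_contra hcon
  push_neg at hcon
  exact absurd this (not_lt.2 (mul_nonpos_of_nonneg_of_nonpos ht.le hcon))
end

section
/- Let Ω ⊂ ℝ^{n+1} be a compact convex body with C¹ boundary, c(X,Y) = |X−Y|²/2, u a c-convex function, and X₀ ∈ ∂Ω such that X̄₀, X̄₁ ∈ ∂_c^Ω u(X₀) ∩ ∂Ω⁺(X₀). If X̄_t is the c-segment with respect to X₀ from X̄₀ to X̄₁, then X̄_t ∈ ∂_c^Ω u(X₀) for all t ∈ [0,1]; in particular the projection of ∂_c^Ω u(X₀) ∩ ∂Ω⁺(X₀) onto the tangent plane at X₀ is convex. -/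
private lemma key_ineq {n : ℕ}
    (Ω : Set (EuclideanSpace ℝ (Fin (n + 1))))
    (N : EuclideanSpace ℝ (Fin (n + 1)) → EuclideanSpace ℝ (Fin (n + 1)))
    (hfr : frontier Ω ⊆ Ω) (hconv : Convex ℝ Ω)
    (hNsupp : ∀ X ∈ frontier Ω, ∀ Z ∈ Ω, (inner ℝ (N X) (Z - X) : ℝ) ≤ 0)
    (u : EuclideanSpace ℝ (Fin (n + 1)) → ℝ)
    (X₀ : EuclideanSpace ℝ (Fin (n + 1))) (hX₀ : X₀ ∈ frontier Ω)
    (Xb₀ Xb₁ : EuclideanSpace ℝ (Fin (n + 1)))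
    (hXb₀f : Xb₀ ∈ frontier Ω)
    (hXb₀s : ∀ Y ∈ frontier Ω, u Y ≥ -(‖Y - Xb₀‖ ^ 2 / 2) + ‖X₀ - Xb₀‖ ^ 2 / 2 + u X₀)
    (hXb₁f : Xb₁ ∈ frontier Ω)
    (hXb₁s : ∀ Y ∈ frontier Ω, u Y ≥ -(‖Y - Xb₁‖ ^ 2 / 2) + ‖X₀ - Xb₁‖ ^ 2 / 2 + u X₀)
    (t : ℝ) (ht0 : 0 ≤ t) (ht1 : t ≤ 1)
    (Z : EuclideanSpace ℝ (Fin (n + 1))) (hZf : Z ∈ frontier Ω)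
    (hZp : (0 : ℝ) < inner ℝ (N Z) (N X₀))
    (hproj : Z - (inner ℝ (N X₀) (Z - X₀) : ℝ) • N X₀ =
      (1 - t) • (Xb₀ - (inner ℝ (N X₀) (Xb₀ - X₀) : ℝ) • N X₀)
        + t • (Xb₁ - (inner ℝ (N X₀) (Xb₁ - X₀) : ℝ) • N X₀)) :
    ∀ Y ∈ frontier Ω, u Y ≥ -(‖Y - Z‖ ^ 2 / 2) + ‖X₀ - Z‖ ^ 2 / 2 + u X₀ := by
  set s : ℝ := (inner ℝ (N X₀) (Z - X₀) : ℝ)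
    - ((1 - t) * (inner ℝ (N X₀) (Xb₀ - X₀) : ℝ) + t * (inner ℝ (N X₀) (Xb₁ - X₀) : ℝ)) with hs_def
  set W : EuclideanSpace ℝ (Fin (n + 1)) := (1 - t) • Xb₀ + t • Xb₁ with hW_def
  have hWΩ : W ∈ Ω := hconv (hfr hXb₀f) (hfr hXb₁f) (by linarith) ht0 (by ring)
  have hZeq : Z = W + s • N X₀ := by
    rw [hW_def, hs_def]
    linear_combination (norm := module) hproj
  have hs : 0 ≤ s := by
    by_contra h
    push_neg at h
    have h1 : W - Z = (-s) • N X₀ := by rw [hZeq]; module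
    have h2 := hNsupp Z hZf W hWΩ
    rw [h1, real_inner_smul_right] at h2
    nlinarith
  intro Y hY
  have hYΩ : Y ∈ Ω := hfr hY
  have key : ∀ A : EuclideanSpace ℝ (Fin (n + 1)),
      -(‖Y - A‖ ^ 2 / 2) + ‖X₀ - A‖ ^ 2 / 2
        = (inner ℝ (Y - X₀) A : ℝ) + (‖X₀‖ ^ 2 - ‖Y‖ ^ 2) / 2 := by
    intro A
    rw [norm_sub_sq_real, norm_sub_sq_real, inner_sub_left]
    ring
  have hA := hXb₀s Y hY
  have hB := hXb₁s Y hY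
  rw [key] at hA hB ⊢
  have hZinner : (inner ℝ (Y - X₀) Z : ℝ)
      = (1 - t) * (inner ℝ (Y - X₀) Xb₀ : ℝ) + t * (inner ℝ (Y - X₀) Xb₁ : ℝ)
        + s * (inner ℝ (Y - X₀) (N X₀) : ℝ) := by
    rw [hZeq, hW_def, inner_add_right, inner_add_right, real_inner_smul_right,
      real_inner_smul_right, real_inner_smul_right]
  have hN0 : (inner ℝ (Y - X₀) (N X₀) : ℝ) ≤ 0 := by
    rw [real_inner_comm]; exact hNsupp X₀ hX₀ Y hYΩ
  have hsneg : s * (inner ℝ (Y - X₀) (N X₀) : ℝ) ≤ 0 :=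
    mul_nonpos_of_nonneg_of_nonpos hs hN0
  rw [hZinner]
  nlinarith [mul_nonneg ht0 (sub_nonneg.2 (by linarith : (inner ℝ (Y - X₀) Xb₁ : ℝ) + (‖X₀‖ ^ 2 - ‖Y‖ ^ 2) / 2 + u X₀ ≤ u Y)),
    mul_nonneg (by linarith : (0:ℝ) ≤ 1 - t) (sub_nonneg.2 (by linarith : (inner ℝ (Y - X₀) Xb₀ : ℝ) + (‖X₀‖ ^ 2 - ‖Y‖ ^ 2) / 2 + u X₀ ≤ u Y))]


/-- c-segments of c-subdifferential points stay in the c-subdifferential: if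
`X̄₀, X̄₁ ∈ ∂_c^Ω u(X₀) ∩ ∂Ω⁺(X₀)` and `Z ∈ ∂Ω⁺(X₀)` lies on the c-segment with respect to
`X₀` from `X̄₀` to `X̄₁` (its tangent-plane projection is the corresponding convex
combination), then `Z ∈ ∂_c^Ω u(X₀)`; in particular the tangent-plane projection of
`∂_c^Ω u(X₀) ∩ ∂Ω⁺(X₀)` is convex. -/
theorem c_segment_in_c_subdifferential {n : ℕ}
    (Ω : Set (EuclideanSpace ℝ (Fin (n + 1))))
    (N : EuclideanSpace ℝ (Fin (n + 1)) → EuclideanSpace ℝ (Fin (n + 1)))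
    (hcomp : IsCompact Ω) (hconv : Convex ℝ Ω) (hint : (interior Ω).Nonempty)
    (hNunit : ∀ X ∈ frontier Ω, ‖N X‖ = 1)
    (hNsupp : ∀ X ∈ frontier Ω, ∀ Z ∈ Ω, (inner ℝ (N X) (Z - X) : ℝ) ≤ 0)
    (hNuniq : ∀ X ∈ frontier Ω, ∀ V : EuclideanSpace ℝ (Fin (n + 1)), ‖V‖ = 1 →
      (∀ Z ∈ Ω, (inner ℝ V (Z - X) : ℝ) ≤ 0) → V = N X)
    (u : EuclideanSpace ℝ (Fin (n + 1)) → ℝ)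
    -- `u` is c-convex on `∂Ω` for the cost `c(X,Y) = |X-Y|²/2`:
    (hcconv : ∃ A : Set (EuclideanSpace ℝ (Fin (n + 1)) × ℝ),
      (∀ p ∈ A, p.1 ∈ frontier Ω) ∧ ∀ X ∈ frontier Ω,
        IsLUB {z : ℝ | ∃ p ∈ A, z = -(‖X - p.1‖ ^ 2 / 2) + p.2} (u X))
    (X₀ : EuclideanSpace ℝ (Fin (n + 1))) (hX₀ : X₀ ∈ frontier Ω)
    (Xb₀ Xb₁ : EuclideanSpace ℝ (Fin (n + 1)))
    -- both `X̄₀, X̄₁` lie in `∂_c^Ω u(X₀) ∩ ∂Ω⁺(X₀)`: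
    (hXb₀ : Xb₀ ∈ {Xb | Xb ∈ frontier Ω ∧
        ∀ Y ∈ frontier Ω, u Y ≥ -(‖Y - Xb‖ ^ 2 / 2) + ‖X₀ - Xb‖ ^ 2 / 2 + u X₀} ∩
      {Y | Y ∈ frontier Ω ∧ (0 : ℝ) < inner ℝ (N Y) (N X₀)})
    (hXb₁ : Xb₁ ∈ {Xb | Xb ∈ frontier Ω ∧
        ∀ Y ∈ frontier Ω, u Y ≥ -(‖Y - Xb‖ ^ 2 / 2) + ‖X₀ - Xb‖ ^ 2 / 2 + u X₀} ∩
      {Y | Y ∈ frontier Ω ∧ (0 : ℝ) < inner ℝ (N Y) (N X₀)})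
    -- existence of lifts of tangent-plane segments back to `∂Ω⁺(X₀)` (the graph of β):
    (hlift : ∀ Y₀ ∈ {Y | Y ∈ frontier Ω ∧ (0 : ℝ) < inner ℝ (N Y) (N X₀)},
      ∀ Y₁ ∈ {Y | Y ∈ frontier Ω ∧ (0 : ℝ) < inner ℝ (N Y) (N X₀)},
      ∀ t ∈ Set.Icc (0 : ℝ) 1,
      ∃ Z ∈ {Y | Y ∈ frontier Ω ∧ (0 : ℝ) < inner ℝ (N Y) (N X₀)},
        Z - (inner ℝ (N X₀) (Z - X₀) : ℝ) • N X₀ =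
          (1 - t) • (Y₀ - (inner ℝ (N X₀) (Y₀ - X₀) : ℝ) • N X₀)
            + t • (Y₁ - (inner ℝ (N X₀) (Y₁ - X₀) : ℝ) • N X₀)) :
    (∀ t ∈ Set.Icc (0 : ℝ) 1,
      ∀ Z ∈ {Y | Y ∈ frontier Ω ∧ (0 : ℝ) < inner ℝ (N Y) (N X₀)},
        Z - (inner ℝ (N X₀) (Z - X₀) : ℝ) • N X₀ =
          (1 - t) • (Xb₀ - (inner ℝ (N X₀) (Xb₀ - X₀) : ℝ) • N X₀)
            + t • (Xb₁ - (inner ℝ (N X₀) (Xb₁ - X₀) : ℝ) • N X₀) →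
        ∀ Y ∈ frontier Ω, u Y ≥ -(‖Y - Z‖ ^ 2 / 2) + ‖X₀ - Z‖ ^ 2 / 2 + u X₀) ∧
    Convex ℝ ((fun Y => Y - (inner ℝ (N X₀) (Y - X₀) : ℝ) • N X₀) ''
      ({Xb | Xb ∈ frontier Ω ∧
          ∀ Y ∈ frontier Ω, u Y ≥ -(‖Y - Xb‖ ^ 2 / 2) + ‖X₀ - Xb‖ ^ 2 / 2 + u X₀} ∩
        {Y | Y ∈ frontier Ω ∧ (0 : ℝ) < inner ℝ (N Y) (N X₀)})) := by
  have hfr : frontier Ω ⊆ Ω := by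
    rw [hcomp.isClosed.frontier_eq]
    exact Set.diff_subset
  obtain ⟨⟨hXb₀f, hXb₀s⟩, hXb₀f', hXb₀p⟩ := hXb₀
  obtain ⟨⟨hXb₁f, hXb₁s⟩, hXb₁f', hXb₁p⟩ := hXb₁
  constructor
  · intro t ht Z hZ hproj
    exact key_ineq Ω N hfr hconv hNsupp u X₀ hX₀ Xb₀ Xb₁ hXb₀f hXb₀s hXb₁f hXb₁s
      t ht.1 ht.2 Z hZ.1 hZ.2 hproj
  · intro p₀ hp₀ p₁ hp₁ a b ha hb hab
    obtain ⟨x₀, ⟨⟨hx₀f, hx₀s⟩, hx₀m⟩, rfl⟩ := hp₀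
    obtain ⟨x₁, ⟨⟨hx₁f, hx₁s⟩, hx₁m⟩, rfl⟩ := hp₁
    obtain ⟨Z, hZm, hZproj⟩ := hlift x₀ hx₀m x₁ hx₁m b ⟨hb, by linarith⟩
    refine ⟨Z, ⟨⟨hZm.1, key_ineq Ω N hfr hconv hNsupp u X₀ hX₀ x₀ x₁ hx₀f hx₀s hx₁f hx₁s
      b hb (by linarith) Z hZm.1 hZm.2 hZproj⟩, hZm⟩, ?_⟩
    dsimp only
    rw [hZproj, show (1 : ℝ) - b = a from by linarith]
end

section
/- Let β : D → ℝ be concave and differentiable on an open convex set D ⊂ ℝⁿ, fix x̄₀ ∈ D, and define Φ(z) := z + (β(z) − β(z₀))·∇β(x̄₀) for a fixed z₀ ∈ D. If for every z ∈ D one has 1 + ⟨∇β(z), ∇β(x̄₀)⟩ > 0, then Φ is injective on D. -/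
open InnerProductSpace

/-- Gradient inequality for concave functions: `β y ≤ β x + ⟪g, y - x⟫`. -/
lemma concave_gradient_ineq {n : ℕ}
    {D : Set (EuclideanSpace ℝ (Fin n))}
    {β : EuclideanSpace ℝ (Fin n) → ℝ} (hβ : ConcaveOn ℝ D β)
    {x y : EuclideanSpace ℝ (Fin n)} (hx : x ∈ D) (hy : y ∈ D)
    {gx : EuclideanSpace ℝ (Fin n)} (hg : HasGradientAt β gx x) :
    β y ≤ β x + inner ℝ gx (y - x) := by
  rcases eq_or_ne x y with rfl | hne
  · simp
  · set L : ℝ →ᵃ[ℝ] EuclideanSpace ℝ (Fin n) := AffineMap.lineMap x y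
    have hL0 : L 0 = x := AffineMap.lineMap_apply_zero x y
    have hL1 : L 1 = y := AffineMap.lineMap_apply_one x y
    have hconc : ConvexOn ℝ (L ⁻¹' D) (fun t => -β (L t)) :=
      (hβ.comp_affineMap L).neg
    have h0 : (0 : ℝ) ∈ L ⁻¹' D := by simp [Set.mem_preimage, hL0, hx]
    have h1 : (1 : ℝ) ∈ L ⁻¹' D := by simp [Set.mem_preimage, hL1, hy]
    -- derivative of t ↦ β (L t) at 0 is ⟪gx, y - x⟫
    have hLd : HasDerivAt (fun t : ℝ => L t) (y - x) 0 := by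
      have : (fun t : ℝ => L t) = fun t : ℝ => x + t • (y - x) := by
        funext t
        simp [L, AffineMap.lineMap_apply, vsub_eq_sub, vadd_eq_add]
        abel
      rw [this]
      simpa using ((hasDerivAt_id (0:ℝ)).smul_const (y - x)).const_add x
    have hfd : HasFDerivAt β ((toDual ℝ _) gx) x := hg.hasFDerivAt
    have hfd' : HasFDerivAt β ((toDual ℝ _) gx) ((fun t : ℝ => L t) 0) := by
      simpa [hL0] using hfd
    have hcomp : HasDerivAt (fun t : ℝ => β (L t)) (inner ℝ gx (y - x)) 0 := by
      have := hfd'.comp_hasDerivAt (0:ℝ) hLd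
      simp only [toDual_apply_apply] at this
      exact this
    have hneg : HasDerivAt (fun t : ℝ => -β (L t)) (-(inner ℝ gx (y - x) : ℝ)) 0 :=
      hcomp.neg
    have hslope := ConvexOn.le_slope_of_hasDerivAt hconc h0 h1 one_pos hneg
    rw [slope_def_field] at hslope
    simp only [hL0, hL1] at hslope
    have : -(inner ℝ gx (y - x) : ℝ) ≤ -β y + β x := by
      simpa [div_one, sub_eq_add_neg] using hslope
    linarith

/-- If `β` is concave and differentiable on an open convex `D`, with gradient `g`, and
`1 + ⟨g z, g x̄₀⟩ > 0` for all `z ∈ D`, then `Φ(z) = z + (β z - β z₀)·g x̄₀` is injective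
on `D`. -/
theorem phi_injective {n : ℕ}
    (D : Set (EuclideanSpace ℝ (Fin n))) (hDconv : Convex ℝ D) (hDopen : IsOpen D)
    (β : EuclideanSpace ℝ (Fin n) → ℝ) (hβ : ConcaveOn ℝ D β)
    (g : EuclideanSpace ℝ (Fin n) → EuclideanSpace ℝ (Fin n))
    (hg : ∀ z ∈ D, HasGradientAt β (g z) z)
    (xb₀ z₀ : EuclideanSpace ℝ (Fin n)) (hxb₀ : xb₀ ∈ D) (hz₀ : z₀ ∈ D)
    (hpos : ∀ z ∈ D, (0 : ℝ) < 1 + inner ℝ (g z) (g xb₀)) :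
    Set.InjOn (fun z => z + (β z - β z₀) • g xb₀) D := by
  intro z₁ h₁ z₂ h₂ heq
  simp only at heq
  -- z₂ - z₁ = (β z₁ - β z₂) • g xb₀
  have hdiff' : z₁ - z₂ = (β z₂ - β z₁) • g xb₀ := by
    have h : z₁ - z₂ = (β z₂ - β z₀) • g xb₀ - (β z₁ - β z₀) • g xb₀ :=
      sub_eq_sub_iff_add_eq_add.mpr (heq.trans (add_comm _ _))
    rw [← sub_smul] at h
    rw [h]
    congr 1
    ring
  have hdiff : z₂ - z₁ = (β z₁ - β z₂) • g xb₀ := by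
    rw [← neg_sub z₁ z₂, hdiff', ← neg_smul, neg_sub]
  -- gradient inequality at z₁ : β z₂ ≤ β z₁ + ⟪g z₁, z₂ - z₁⟫
  have h12 := concave_gradient_ineq hβ h₁ h₂ (hg z₁ h₁)
  have h21 := concave_gradient_ineq hβ h₂ h₁ (hg z₂ h₂)
  rw [hdiff] at h12
  rw [hdiff'] at h21
  rw [real_inner_smul_right] at h12 h21
  set a : ℝ := inner ℝ (g z₁) (g xb₀) with ha
  set b : ℝ := inner ℝ (g z₂) (g xb₀) with hb
  have hpa : 0 < 1 + a := hpos z₁ h₁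
  have hpb : 0 < 1 + b := hpos z₂ h₂
  -- h12 : β z₂ ≤ β z₁ + (β z₁ - β z₂) * a
  -- h21 : β z₁ ≤ β z₂ + (β z₂ - β z₁) * b
  have hc1 : (β z₂ - β z₁) * (1 + a) ≤ 0 := by nlinarith
  have hc2 : (β z₁ - β z₂) * (1 + b) ≤ 0 := by nlinarith
  have he : β z₁ = β z₂ := by nlinarith
  have : z₁ - z₂ = 0 := by rw [hdiff', he]; simp
  have := sub_eq_zero.mp this
  exact this
end

section
/- Let Ω ⊂ ℝ^{n+1} be a compact convex body with C¹ boundary and c(X,Y)=|X−Y|²/2. Let u be c-convex, X₀ ∈ ∂Ω a point of tangential differentiability of u with tangential gradient ∇^Ω u(X₀), and suppose ∂_c^Ω u(X₀) ⊂ ∂Ω⁺(X₀). Then there exists X̄₀ ∈ ∂_c^Ω u(X₀) with proj^Ω_{X₀}(X̄₀ − X₀) = ∇^Ω u(X₀); i.e., the tangential gradient of u at X₀ determines an element of the c-subdifferential via the inverse of the projection (the c-exponential map). -/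
open Filter

open Metric

set_option maxHeartbeats 1000000

open scoped RealInnerProductSpace

lemma exists_ray_frontier {E : Type*} [NormedAddCommGroup E] [NormedSpace ℝ E]
    {Ω : Set E} (hcomp : IsCompact Ω) {Z : E} (hZ : Z ∈ Ω) {NN : E} (hN : ‖NN‖ = 1) :
    ∃ s : ℝ, 0 ≤ s ∧ Z + s • NN ∈ frontier Ω := by
  obtain ⟨R, hR⟩ := hcomp.isBounded.subset_ball 0
  set S : Set ℝ := {s : ℝ | 0 ≤ s ∧ Z + s • NN ∈ Ω} with hSdef
  have hS0 : (0 : ℝ) ∈ S := ⟨le_refl 0, by simpa using hZ⟩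
  have hSbdd : BddAbove S := by
    refine ⟨R + ‖Z‖, fun s hs => ?_⟩
    have h1 : ‖Z + s • NN‖ < R := by simpa using hR hs.2
    have h2 : ‖s • NN‖ ≤ ‖Z + s • NN‖ + ‖Z‖ := by
      have := norm_sub_le (Z + s • NN) Z
      simpa using this
    have h3 : ‖s • NN‖ = s := by
      rw [norm_smul, hN, mul_one, Real.norm_eq_abs, abs_of_nonneg hs.1]
    linarith
  have hSclosed : IsClosed S := by
    have : S = Set.Ici (0:ℝ) ∩ (fun s : ℝ => Z + s • NN) ⁻¹' Ω := by
      ext s; simp [hSdef, Set.mem_Ici]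
    rw [this]
    exact isClosed_Ici.inter (hcomp.isClosed.preimage (by continuity))
  set s₀ := sSup S with hs₀def
  have hs₀S : s₀ ∈ S := hSclosed.csSup_mem ⟨0, hS0⟩ hSbdd
  refine ⟨s₀, hs₀S.1, ?_⟩
  rw [frontier, hcomp.isClosed.closure_eq]
  refine ⟨hs₀S.2, fun hint => ?_⟩
  obtain ⟨η, hη, hball⟩ := Metric.isOpen_iff.1 isOpen_interior _ hint
  have hmem : s₀ + η / 2 ∈ S := by
    refine ⟨by linarith [hs₀S.1], interior_subset (hball ?_)⟩
    have : Z + (s₀ + η / 2) • NN - (Z + s₀ • NN) = (η / 2) • NN := by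
      rw [add_smul]; abel
    rw [mem_ball, dist_eq_norm, this, norm_smul, hN, mul_one, Real.norm_eq_abs,
      abs_of_pos (by linarith)]
    linarith
  have := le_csSup hSbdd hmem
  linarith


/-- If `u` is c-convex (for `c(X,Y)=|X-Y|²/2`), tangentially differentiable at `X₀ ∈ ∂Ω`
with tangential gradient `G`, and `∂_c^Ω u(X₀) ⊆ ∂Ω⁺(X₀)`, then there is
`X̄₀ ∈ ∂_c^Ω u(X₀)` whose tangent-plane projection satisfies `proj^Ω_{X₀}(X̄₀ - X₀) = G`. -/
theorem tangential_gradient_gives_c_subdifferential {n : ℕ}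
    (Ω : Set (EuclideanSpace ℝ (Fin (n + 1))))
    (N : EuclideanSpace ℝ (Fin (n + 1)) → EuclideanSpace ℝ (Fin (n + 1)))
    (hcomp : IsCompact Ω) (hconv : Convex ℝ Ω) (hint : (interior Ω).Nonempty)
    (hNunit : ∀ X ∈ frontier Ω, ‖N X‖ = 1)
    (hNsupp : ∀ X ∈ frontier Ω, ∀ Z ∈ Ω, (inner ℝ (N X) (Z - X) : ℝ) ≤ 0)
    (hNuniq : ∀ X ∈ frontier Ω, ∀ V : EuclideanSpace ℝ (Fin (n + 1)), ‖V‖ = 1 →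
      (∀ Z ∈ Ω, (inner ℝ V (Z - X) : ℝ) ≤ 0) → V = N X)
    (u : EuclideanSpace ℝ (Fin (n + 1)) → ℝ)
    -- `u` is c-convex on `∂Ω`, with attained suprema (by compactness):
    (hcconv : ∃ A : Set (EuclideanSpace ℝ (Fin (n + 1)) × ℝ),
      (∀ p ∈ A, p.1 ∈ frontier Ω) ∧ ∀ X ∈ frontier Ω,
        IsGreatest {z : ℝ | ∃ p ∈ A, z = -(‖X - p.1‖ ^ 2 / 2) + p.2} (u X))
    (X₀ : EuclideanSpace ℝ (Fin (n + 1))) (hX₀ : X₀ ∈ frontier Ω)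
    -- `u` is tangentially differentiable at `X₀` with tangential gradient `G`:
    (G : EuclideanSpace ℝ (Fin (n + 1))) (hGtan : (inner ℝ (N X₀) G : ℝ) = 0)
    (hGdiff : ∀ ε > (0 : ℝ), ∀ᶠ Y in nhdsWithin X₀ (frontier Ω),
      |u Y - u X₀ - (inner ℝ G (Y - X₀) : ℝ)| ≤ ε * ‖Y - X₀‖)
    -- `∂_c^Ω u(X₀) ⊆ ∂Ω⁺(X₀)`:
    (hsub : {Xb | Xb ∈ frontier Ω ∧
        ∀ Y ∈ frontier Ω, u Y ≥ -(‖Y - Xb‖ ^ 2 / 2) + ‖X₀ - Xb‖ ^ 2 / 2 + u X₀} ⊆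
      {Y | Y ∈ frontier Ω ∧ (0 : ℝ) < inner ℝ (N Y) (N X₀)}) :
    ∃ Xb₀ : EuclideanSpace ℝ (Fin (n + 1)),
      (Xb₀ ∈ frontier Ω ∧
        ∀ Y ∈ frontier Ω, u Y ≥ -(‖Y - Xb₀‖ ^ 2 / 2) + ‖X₀ - Xb₀‖ ^ 2 / 2 + u X₀) ∧
      (Xb₀ - X₀) - (inner ℝ (N X₀) (Xb₀ - X₀) : ℝ) • N X₀ = G := by
  classical
  obtain ⟨A, hA1, hA2⟩ := hcconv
  obtain ⟨p, hpA, hpX₀⟩ := (hA2 X₀ hX₀).1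
  set Xb₀ := p.1 with hXbdef
  clear_value Xb₀
  have hXbΩ : Xb₀ ∈ frontier Ω := by rw [hXbdef]; exact hA1 p hpA
  have hsubXb : ∀ Y ∈ frontier Ω,
      u Y ≥ -(‖Y - Xb₀‖ ^ 2 / 2) + ‖X₀ - Xb₀‖ ^ 2 / 2 + u X₀ := by
    intro Y hY
    have h1 : -(‖Y - p.1‖ ^ 2 / 2) + p.2 ≤ u Y := (hA2 Y hY).2 ⟨p, hpA, rfl⟩
    rw [← hXbdef] at h1
    linarith [hpX₀]
  refine ⟨Xb₀, ⟨hXbΩ, hsubXb⟩, ?_⟩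
  set NN := N X₀ with hNNdef
  clear_value NN
  have hN1 : ‖NN‖ = 1 := by rw [hNNdef]; exact hNunit X₀ hX₀
  have hNN : ⟪NN, NN⟫ = 1 := by
    rw [real_inner_self_eq_norm_sq, hN1]; norm_num
  set V : EuclideanSpace ℝ (Fin (n + 1)) := Xb₀ - X₀ - G with hVdef
  clear_value V
  set W : EuclideanSpace ℝ (Fin (n + 1)) := V - ⟪NN, V⟫ • NN with hWdef
  clear_value W
  have hNV : ⟪NN, Xb₀ - X₀⟫ = ⟪NN, V⟫ := by
    have hsplit : Xb₀ - X₀ = V + G := by rw [hVdef]; abel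
    rw [hsplit, inner_add_right, hGtan, add_zero]
  have hgoal : W = 0 → (Xb₀ - X₀) - ⟪NN, Xb₀ - X₀⟫ • NN = G := by
    intro h
    have h2 : V = ⟪NN, V⟫ • NN := by rwa [hWdef, sub_eq_zero] at h
    have h3 : Xb₀ - X₀ - G = ⟪NN, V⟫ • NN := by rw [← hVdef]; exact h2
    rw [hNV, sub_eq_iff_eq_add] at *
    rw [h3]; abel
  refine hgoal ?_
  by_contra hW0
  have hWpos : 0 < ‖W‖ := norm_pos_iff.mpr hW0
  have hNW : ⟪NN, W⟫ = 0 := by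
    rw [hWdef, inner_sub_right, real_inner_smul_right, hNN]; ring
  have hVW : ⟪V, W⟫ = ‖W‖ ^ 2 := by
    have hVeq : V = W + ⟪NN, V⟫ • NN := by rw [hWdef]; abel
    calc ⟪V, W⟫ = ⟪W + ⟪NN, V⟫ • NN, W⟫ := by rw [← hVeq]
      _ = ⟪W, W⟫ + ⟪NN, V⟫ * ⟪NN, W⟫ := by
          rw [inner_add_left, real_inner_smul_left]
      _ = ‖W‖ ^ 2 := by rw [hNW, real_inner_self_eq_norm_sq]; ring
  set d := ‖W‖⁻¹ • W with hddef
  clear_value d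
  have hd1 : ‖d‖ = 1 := by
    rw [hddef, norm_smul, Real.norm_eq_abs, abs_inv, abs_norm,
      inv_mul_cancel₀ hWpos.ne']
  have hNd : ⟪NN, d⟫ = 0 := by rw [hddef, real_inner_smul_right, hNW, mul_zero]
  have hVd : ⟪V, d⟫ = ‖W‖ := by
    rw [hddef, real_inner_smul_right, hVW, sq]
    field_simp
  have hX₀Ω : X₀ ∈ Ω := hcomp.isClosed.frontier_subset hX₀
  -- linear form of the subdifferential inequality
  have hlinV : ∀ Y ∈ frontier Ω,
      ⟪V, Y - X₀⟫ ≤ (u Y - u X₀ - ⟪G, Y - X₀⟫) + ‖Y - X₀‖ ^ 2 / 2 := by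
    intro Y hY
    have h1 := hsubXb Y hY
    have h2 : ‖Y - Xb₀‖ ^ 2
        = ‖Y - X₀‖ ^ 2 - 2 * ⟪Xb₀ - X₀, Y - X₀⟫ + ‖X₀ - Xb₀‖ ^ 2 := by
      have e : Y - Xb₀ = (Y - X₀) - (Xb₀ - X₀) := by abel
      rw [e, norm_sub_sq_real, real_inner_comm, ← norm_sub_rev X₀ Xb₀]
    have e2 : ⟪V, Y - X₀⟫ = ⟪Xb₀ - X₀, Y - X₀⟫ - ⟪G, Y - X₀⟫ := by
      rw [hVdef, inner_sub_left]
    linarith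
  -- tangent cone
  set S : Set (EuclideanSpace ℝ (Fin (n + 1))) := (fun z => z - X₀) '' Ω with hSdef
  have hSconv : Convex ℝ S := by
    have h := hconv.translate (-X₀)
    have he : (fun z => -X₀ + z) '' Ω = S := by
      ext x
      simp only [Set.mem_image, hSdef]
      constructor <;> rintro ⟨z, hz, rfl⟩ <;> exact ⟨z, hz, by abel⟩
    rwa [he] at h
  set K : ConvexCone ℝ (EuclideanSpace ℝ (Fin (n + 1))) := (hSconv.toCone S).closure
    with hKdef
  have hKset : (K : Set (EuclideanSpace ℝ (Fin (n + 1))))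
      = closure ((hSconv.toCone S : Set (EuclideanSpace ℝ (Fin (n + 1))))) := by
    rw [hKdef, ConvexCone.coe_closure]
  have hSsubK : S ⊆ (K : Set (EuclideanSpace ℝ (Fin (n + 1)))) := by
    intro x hx
    rw [hKset]
    exact subset_closure (hSconv.mem_toCone.mpr ⟨1, one_pos, x, hx, one_smul _ _⟩)
  have hKne : (K : Set (EuclideanSpace ℝ (Fin (n + 1)))).Nonempty :=
    ⟨X₀ - X₀, hSsubK ⟨X₀, hX₀Ω, rfl⟩⟩
  have hKclosed : IsClosed (K : Set (EuclideanSpace ℝ (Fin (n + 1)))) := by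
    rw [hKset]; exact isClosed_closure
  have hdK : d ∈ (K : Set (EuclideanSpace ℝ (Fin (n + 1)))) := by
    by_contra hdn
    have hK0 : K.Pointed := by
      have h0 : X₀ - X₀ ∈ (K : Set (EuclideanSpace ℝ (Fin (n + 1)))) :=
        hSsubK ⟨X₀, hX₀Ω, rfl⟩
      rw [sub_self] at h0
      exact h0
    obtain ⟨y, hy1, hy2⟩ := ProperCone.hyperplane_separation'
      ({ toSubmodule := K.toPointedCone hK0, isClosed' := hKclosed } :
        ProperCone ℝ (EuclideanSpace ℝ (Fin (n + 1)))) (x₀ := d) hdn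
    have hy0 : y ≠ 0 := by rintro rfl; simp at hy2
    have hynorm : 0 < ‖y‖ := norm_pos_iff.mpr hy0
    set V' := (-‖y‖⁻¹) • y with hV'def
    have hV'1 : ‖V'‖ = 1 := by
      rw [hV'def, norm_smul, Real.norm_eq_abs, abs_neg, abs_inv, abs_norm,
        inv_mul_cancel₀ hynorm.ne']
    have hV'supp : ∀ Z ∈ Ω, ⟪V', Z - X₀⟫ ≤ 0 := by
      intro Z hZ
      have hx : Z - X₀ ∈ K := hSsubK ⟨Z, hZ, rfl⟩
      have hp := hy1 _ hx
      rw [hV'def, real_inner_smul_left]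
      have hcm : ⟪y, Z - X₀⟫ = ⟪Z - X₀, y⟫ := real_inner_comm _ _
      rw [hcm]
      have hinv : 0 ≤ ‖y‖⁻¹ := inv_nonneg.mpr (norm_nonneg y)
      have hmm := mul_nonneg hinv hp
      linarith
    have hV'N : V' = NN := by rw [hNNdef]; exact hNuniq X₀ hX₀ V' hV'1 hV'supp
    have hpos : 0 < ⟪V', d⟫ := by
      rw [hV'def, real_inner_smul_left]
      have hi : 0 < ‖y‖⁻¹ := inv_pos.mpr hynorm
      have hmm := mul_pos hi (neg_pos.mpr hy2)
      nlinarith [hmm, real_inner_comm d y]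
    rw [hV'N, hNd] at hpos
    exact lt_irrefl _ hpos
  -- the key estimate
  have hkey : ∀ ε : ℝ, 0 < ε → ε ≤ 1 → ‖W‖ ≤ ε * (2 * ‖V‖ + 8) := by
    intro ε hε hε1
    obtain ⟨δ, hδpos, hδ⟩ := Metric.mem_nhdsWithin_iff.mp (hGdiff ε hε)
    have hd_mem : d ∈ closure ((hSconv.toCone S :
        Set (EuclideanSpace ℝ (Fin (n + 1))))) := by rwa [hKset] at hdK
    obtain ⟨t, htK, htd⟩ := Metric.mem_closure_iff.mp hd_mem ε hε
    obtain ⟨c, hc, Z₁, hZ₁S, hct⟩ := hSconv.mem_toCone.mp htK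
    obtain ⟨Z₁', hZ₁'Ω, rfl⟩ := hZ₁S
    set ρ := min (δ / 4) ε with hρdef
    clear_value ρ
    have hρpos : 0 < ρ := by rw [hρdef]; exact lt_min (by linarith) hε
    set μ := min 1 (c * ρ) with hμdef
    clear_value μ
    have hμpos : 0 < μ := by rw [hμdef]; exact lt_min one_pos (mul_pos hc hρpos)
    have hμ1 : μ ≤ 1 := by rw [hμdef]; exact min_le_left _ _
    set κ := μ / c with hκdef
    clear_value κ
    have hκpos : 0 < κ := by rw [hκdef]; exact div_pos hμpos hc
    have hκρ : κ ≤ ρ := by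
      rw [hκdef, div_le_iff₀ hc]
      calc μ ≤ c * ρ := by rw [hμdef]; exact min_le_right _ _
        _ = ρ * c := mul_comm _ _
    have hκε : κ ≤ ε := hκρ.trans (by rw [hρdef]; exact min_le_right _ _)
    set Z := X₀ + μ • (Z₁' - X₀) with hZdef
    clear_value Z
    have hZΩ : Z ∈ Ω := by
      have hcc := hconv hX₀Ω hZ₁'Ω (a := 1 - μ) (b := μ) (by linarith) hμpos.le
        (by ring)
      have he : (1 - μ) • X₀ + μ • Z₁' = Z := by rw [hZdef]; module
      rwa [he] at hcc
    have haeq : Z - X₀ = κ • t := by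
      have h1 : κ • t = μ • (Z₁' - X₀) := by
        rw [← hct, smul_smul, hκdef, div_mul_cancel₀ _ hc.ne']
      rw [h1, hZdef]; abel
    have htd' : ‖t - d‖ ≤ ε := by
      rw [dist_eq_norm] at htd
      rw [← norm_sub_rev d t]
      exact htd.le
    have htdV : |⟪V, t - d⟫| ≤ ‖V‖ * ε := by
      have h2 := abs_real_inner_le_norm V (t - d)
      have := mul_le_mul_of_nonneg_left htd' (norm_nonneg V)
      linarith
    have htdN : |⟪NN, t - d⟫| ≤ ε := by
      have h2 := abs_real_inner_le_norm NN (t - d)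
      rw [hN1, one_mul] at h2
      linarith
    have hsplitN : ⟪NN, t⟫ = ⟪NN, d⟫ + ⟪NN, t - d⟫ := by
      rw [← inner_add_right]; congr 1; abel
    have hsplitV : ⟪V, t⟫ = ⟪V, d⟫ + ⟪V, t - d⟫ := by
      rw [← inner_add_right]; congr 1; abel
    have hNt : -ε ≤ ⟪NN, t⟫ := by
      rw [hsplitN, hNd]
      have := abs_le.mp htdN
      linarith [this.1]
    have hVt : ‖W‖ - ‖V‖ * ε ≤ ⟪V, t⟫ := by
      rw [hsplitV, hVd]
      have := abs_le.mp htdV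
      linarith [this.1]
    have htnorm : ‖t‖ ≤ 1 + ε := by
      have he : t = d + (t - d) := by abel
      calc ‖t‖ = ‖d + (t - d)‖ := by rw [← he]
        _ ≤ ‖d‖ + ‖t - d‖ := norm_add_le _ _
        _ ≤ 1 + ε := by rw [hd1]; linarith
    obtain ⟨s, hs0, hYfr⟩ := exists_ray_frontier hcomp hZΩ hN1
    set Y := Z + s • NN with hYdef
    clear_value Y
    have hYΩ : Y ∈ Ω := hcomp.isClosed.frontier_subset hYfr
    have hsupY : ⟪NN, Y - X₀⟫ ≤ 0 := by rw [hNNdef]; exact hNsupp X₀ hX₀ Y hYΩ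
    have hYX₀ : Y - X₀ = κ • t + s • NN := by
      have h1 : Y - X₀ = (Z - X₀) + s • NN := by rw [hYdef]; abel
      rw [h1, haeq]
    have hsbound : s ≤ κ * ε := by
      have h1 : ⟪NN, Y - X₀⟫ = κ * ⟪NN, t⟫ + s * ⟪NN, NN⟫ := by
        rw [hYX₀, inner_add_right, real_inner_smul_right, real_inner_smul_right]
      rw [hNN, mul_one] at h1
      have hm := mul_le_mul_of_nonneg_left hNt hκpos.le
      linarith
    have hYnorm : ‖Y - X₀‖ ≤ 3 * κ := by
      rw [hYX₀]
      have h1 : ‖κ • t + s • NN‖ ≤ ‖κ • t‖ + ‖s • NN‖ := norm_add_le _ _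
      have h2 : ‖κ • t‖ = κ * ‖t‖ := by
        rw [norm_smul, Real.norm_eq_abs, abs_of_pos hκpos]
      have h3 : ‖s • NN‖ = s := by
        rw [norm_smul, hN1, mul_one, Real.norm_eq_abs, abs_of_nonneg hs0]
      have h4 : κ * ‖t‖ ≤ κ * (1 + ε) := mul_le_mul_of_nonneg_left htnorm hκpos.le
      have h5 : κ * ε ≤ κ * 1 := mul_le_mul_of_nonneg_left hε1 hκpos.le
      linarith
    have hVY : κ * (‖W‖ - 2 * ε * ‖V‖) ≤ ⟪V, Y - X₀⟫ := by
      have h1 : ⟪V, Y - X₀⟫ = κ * ⟪V, t⟫ + s * ⟪V, NN⟫ := by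
        rw [hYX₀, inner_add_right, real_inner_smul_right, real_inner_smul_right]
      have h2 : |⟪V, NN⟫| ≤ ‖V‖ := by
        have := abs_real_inner_le_norm V NN
        rwa [hN1, mul_one] at this
      have h3 := abs_le.mp h2
      have h4 := mul_le_mul_of_nonneg_left hVt hκpos.le
      have h5 := mul_le_mul_of_nonneg_left h3.1 hs0
      have h6 := mul_le_mul_of_nonneg_right hsbound (norm_nonneg V)
      linarith
    have hYdist : dist Y X₀ < δ := by
      rw [dist_eq_norm]
      have : κ ≤ δ / 4 := hκρ.trans (by rw [hρdef]; exact min_le_left _ _)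
      calc ‖Y - X₀‖ ≤ 3 * κ := hYnorm
        _ < δ := by linarith
    have hdiff : |u Y - u X₀ - ⟪G, Y - X₀⟫| ≤ ε * ‖Y - X₀‖ :=
      hδ ⟨mem_ball.mpr hYdist, hYfr⟩
    have hup := hlinV Y hYfr
    have habs := abs_le.mp hdiff
    have hYn0 : 0 ≤ ‖Y - X₀‖ := norm_nonneg _
    have hfin : κ * ‖W‖ ≤ κ * (ε * (2 * ‖V‖ + 8)) := by
      have m1 := mul_le_mul_of_nonneg_left hYnorm hε.le
      have m2 := mul_self_le_mul_self hYn0 hYnorm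
      have m3 : κ * κ ≤ ε * κ := mul_le_mul_of_nonneg_right hκε hκpos.le
      have hsq : ‖Y - X₀‖ ^ 2 = ‖Y - X₀‖ * ‖Y - X₀‖ := sq ‖Y - X₀‖
      linarith
    exact le_of_mul_le_mul_left hfin hκpos
  have hC : (0 : ℝ) < 2 * ‖V‖ + 8 := by positivity
  set ε₀ := min 1 (‖W‖ / (2 * (2 * ‖V‖ + 8))) with hε₀def
  clear_value ε₀
  have hε₀pos : 0 < ε₀ := by rw [hε₀def]; exact lt_min one_pos (by positivity)
  have h1 := hkey ε₀ hε₀pos (by rw [hε₀def]; exact min_le_left _ _)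
  have h2 : ε₀ * (2 * ‖V‖ + 8) ≤ (‖W‖ / (2 * (2 * ‖V‖ + 8))) * (2 * ‖V‖ + 8) :=
    mul_le_mul_of_nonneg_right (by rw [hε₀def]; exact min_le_right _ _) hC.le
  have h3 : (‖W‖ / (2 * (2 * ‖V‖ + 8))) * (2 * ‖V‖ + 8) = ‖W‖ / 2 := by
    field_simp
  linarith
end
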